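/- For every n ≥ 1, the recurrence coefficient b̃_n = ⟨f_{n+1}, s_{n−1}⟩_S/‖s_{n−1}‖_S² satisfies b̃_n = ‖p_n‖₂²/‖s_{n−1}‖_S², and in particular 0 < b̃_n ≤ C²; for every n ≥ 2 one has moreover b̃_n ≤ χ^{−1}·C⁴. -/

import Mathlib

/-!
The numerator is `⟨𝒢p_n, s_{n-1}⟩₂ + χ⟨p_n, Δs_{n-1}⟩₂ = ⟨p_n, 𝒢s_{n-1}⟩₂ = ‖p_n‖₂²`, because
`Δs_{n-1}` has degree `< n` and `𝒢s_{n-1}` is monic of degree `n`. Both bounds then come from the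
extremal property `‖p_n‖₂ ≤ ‖q‖₂` for every monic `q` of degree `n`: applied to `q = 𝒢s_{n-1}` it
gives `‖p_n‖₂ ≤ C‖s_{n-1}‖₂ ≤ C‖s_{n-1}‖_S`, and applied to `q = 𝒢𝒢p_{n-2}` and to
`q = Δs_{n-1}` it gives `‖p_n‖₂ ≤ C²‖p_{n-2}‖₂ ≤ C²‖Δs_{n-1}‖₂ ≤ C²χ^{-1/2}‖s_{n-1}‖_S`.
-/

open Filter RealInnerProductSpace

variable {H : Type*} [NormedAddCommGroup H] [InnerProductSpace ℝ H]

/-- `Wlt P n` is the span of `P 0, …, P (n-1)`; thus `Wlt P 0 = ⊥ = W_{-1}` and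
`Wlt P (n+1)` is the space `W_n = span{P_0, …, P_n}`. -/
def Wlt (P : ℕ → H) (n : ℕ) : Submodule ℝ H := Submodule.span ℝ (P '' Set.Iio n)

/-- `Wtot P` is the space `W = ⋃ₙ Wₙ` of all polynomials. -/
def Wtot (P : ℕ → H) : Submodule ℝ H := Submodule.span ℝ (Set.range P)

/-- The Sobolev inner product `⟨f, g⟩_S = ⟨f, g⟩₂ + χ⟨Δf, Δg⟩₂`. -/
noncomputable def innerS (Δ : H →ₗ[ℝ] H) (χ : ℝ) (f g : H) : ℝ :=
  ⟪ f, g ⟫ + χ * ⟪ Δ f, Δ g ⟫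

/-- The Sobolev norm `‖f‖_S = √(‖f‖₂² + χ‖Δf‖₂²)`. -/
noncomputable def normS (Δ : H →ₗ[ℝ] H) (χ : ℝ) (f : H) : ℝ :=
  Real.sqrt (‖f‖ ^ 2 + χ * ‖Δ f‖ ^ 2)

def IsMonicOfDeg (P : ℕ → H) (n : ℕ) (q : H) : Prop := q - P n ∈ Wlt P n

section Basis

variable (P : ℕ → H)

lemma Wlt_mono {m n : ℕ} (h : m ≤ n) : Wlt P m ≤ Wlt P n :=
  Submodule.span_mono (Set.image_mono (Set.Iio_subset_Iio h))

lemma Wlt_le_Wtot (n : ℕ) : Wlt P n ≤ Wtot P :=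
  Submodule.span_mono (Set.image_subset_range _ _)

lemma apply_mem_Wlt {k n : ℕ} (h : k < n) : P k ∈ Wlt P n :=
  Submodule.subset_span ⟨k, h, rfl⟩

lemma apply_notMem_Wlt {P : ℕ → H} (hP : LinearIndependent ℝ P) (n : ℕ) : P n ∉ Wlt P n :=
  hP.notMem_span_image (by simp)

lemma Wlt_succ (n : ℕ) : Wlt P (n + 1) = Wlt P n ⊔ ℝ ∙ P n := by
  rw [Wlt, Wlt, ← Order.succ_eq_add_one, Set.Iio_succ_eq_Iic, ← Set.Iio_insert,
    Set.image_insert_eq, Submodule.span_insert, sup_comm]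

end Basis

namespace IsMonicOfDeg

variable {P : ℕ → H} {n : ℕ} {q : H}

lemma mem_Wlt_succ (hq : IsMonicOfDeg P n q) : q ∈ Wlt P (n + 1) := by
  simpa using add_mem (Wlt_mono P n.le_succ hq) (apply_mem_Wlt P n.lt_succ_self)

lemma ne_zero (hP : LinearIndependent ℝ P) (hq : IsMonicOfDeg P n q) : q ≠ 0 := by
  rintro rfl
  exact apply_notMem_Wlt hP n (by simpa [IsMonicOfDeg] using hq)

lemma sub_mem_Wlt {q' : H} (hq : IsMonicOfDeg P n q) (hq' : IsMonicOfDeg P n q') :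
    q - q' ∈ Wlt P n := by
  simpa using sub_mem hq hq'

end IsMonicOfDeg

section Lowering

variable {P : ℕ → H} {Δ : H →ₗ[ℝ] H}

lemma delta_mem_Wlt (hΔ0 : Δ (P 0) = 0) (hΔsucc : ∀ n, Δ (P (n + 1)) = P n) {n : ℕ} {u : H}
    (hu : u ∈ Wlt P (n + 1)) : Δ u ∈ Wlt P n := by
  refine Submodule.map_le_iff_le_comap.mpr (Submodule.span_le.mpr ?_) (Submodule.mem_map_of_mem hu)
  rintro _ ⟨k, hk, rfl⟩
  cases k with
  | zero => simp [hΔ0]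
  | succ j => simpa [hΔsucc] using apply_mem_Wlt P (Nat.lt_of_succ_lt_succ hk)

lemma IsMonicOfDeg.delta (hΔ0 : Δ (P 0) = 0) (hΔsucc : ∀ n, Δ (P (n + 1)) = P n) {n : ℕ}
    {q : H} (hq : IsMonicOfDeg P (n + 1) q) : IsMonicOfDeg P n (Δ q) := by
  simpa only [IsMonicOfDeg, map_sub, hΔsucc] using delta_mem_Wlt hΔ0 hΔsucc hq

lemma mem_Wlt_succ_of_delta_mem (hP : LinearIndependent ℝ P) (hΔ0 : Δ (P 0) = 0)
    (hΔsucc : ∀ n, Δ (P (n + 1)) = P n) {n : ℕ} {v : H} (hv : v ∈ Wlt P (n + 2))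
    (hΔv : Δ v ∈ Wlt P n) : v ∈ Wlt P (n + 1) := by
  obtain ⟨w, hw, _, hb, rfl⟩ := Submodule.mem_sup.mp ((Wlt_succ P (n + 1)).le hv)
  obtain ⟨c, rfl⟩ := Submodule.mem_span_singleton.mp hb
  have hc : c • P n ∈ Wlt P n := by
    simpa [hΔsucc] using sub_mem hΔv (delta_mem_Wlt hΔ0 hΔsucc hw)
  rcases eq_or_ne c 0 with rfl | hc0
  · simpa using hw
  · exact absurd ((Submodule.smul_mem_iff _ hc0).mp hc) (apply_notMem_Wlt hP n)

/-- Since `Δ(𝒢u - P_{n+1}) = u - P_n` has degree `< n`, the top coefficient of `𝒢u` is that of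
`P_{n+1}`. -/
lemma IsMonicOfDeg.green (hP : LinearIndependent ℝ P) (hΔ0 : Δ (P 0) = 0)
    (hΔsucc : ∀ n, Δ (P (n + 1)) = P n) {G : H →ₗ[ℝ] H} (hGinv : ∀ u ∈ Wtot P, Δ (G u) = u)
    (hGmap : ∀ n, ∀ u ∈ Wlt P (n + 1), G u ∈ Wlt P (n + 2)) {n : ℕ} {u : H}
    (hu : IsMonicOfDeg P n u) : IsMonicOfDeg P (n + 1) (G u) := by
  have hu' : u ∈ Wlt P (n + 1) := hu.mem_Wlt_succ
  refine mem_Wlt_succ_of_delta_mem hP hΔ0 hΔsucc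
    (sub_mem (hGmap n u hu') (apply_mem_Wlt P (by omega))) ?_
  rwa [map_sub, hGinv u (Wlt_le_Wtot P _ hu'), hΔsucc]

end Lowering

section Orthogonal

variable {P p : ℕ → H}

lemma inner_eq_norm_sq_of_isMonicOfDeg (hpmonic : ∀ n, IsMonicOfDeg P n (p n))
    (hportho : ∀ n, ∀ w ∈ Wlt P n, ⟪p n, w⟫ = 0) {n : ℕ} {q : H} (hq : IsMonicOfDeg P n q) :
    ⟪p n, q⟫ = ‖p n‖ ^ 2 := by
  have h := hportho n _ (hq.sub_mem_Wlt (hpmonic n))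
  rwa [inner_sub_right, real_inner_self_eq_norm_sq, sub_eq_zero] at h

lemma norm_le_norm_of_isMonicOfDeg (hpmonic : ∀ n, IsMonicOfDeg P n (p n))
    (hportho : ∀ n, ∀ w ∈ Wlt P n, ⟪p n, w⟫ = 0) {n : ℕ} {q : H} (hq : IsMonicOfDeg P n q) :
    ‖p n‖ ≤ ‖q‖ := by
  have h : ‖p n‖ * ‖p n‖ ≤ ‖p n‖ * ‖q‖ := by
    rw [← sq, ← inner_eq_norm_sq_of_isMonicOfDeg hpmonic hportho hq]
    exact real_inner_le_norm _ _
  rcases (norm_nonneg (p n)).eq_or_lt with h0 | hpos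
  · exact h0 ▸ norm_nonneg q
  · exact le_of_mul_le_mul_left h hpos

end Orthogonal

section Recurrence

variable {P p s : ℕ → H} {Δ G : H →ₗ[ℝ] H}

lemma innerS_green_eq_norm_sq (hP : LinearIndependent ℝ P) (hΔ0 : Δ (P 0) = 0)
    (hΔsucc : ∀ n, Δ (P (n + 1)) = P n)
    (hGsym : ∀ u ∈ Wtot P, ∀ v ∈ Wtot P, ⟪G u, v⟫ = ⟪u, G v⟫)
    (hGinv : ∀ u ∈ Wtot P, Δ (G u) = u)
    (hGmap : ∀ n, ∀ u ∈ Wlt P (n + 1), G u ∈ Wlt P (n + 2)) (χ : ℝ)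
    (hpmonic : ∀ n, IsMonicOfDeg P n (p n)) (hportho : ∀ n, ∀ w ∈ Wlt P n, ⟪p n, w⟫ = 0)
    (hsmonic : ∀ n, IsMonicOfDeg P n (s n)) (n : ℕ) :
    innerS Δ χ (G (p (n + 1))) (s n) = ‖p (n + 1)‖ ^ 2 := by
  have hp : p (n + 1) ∈ Wtot P := Wlt_le_Wtot P _ (hpmonic _).mem_Wlt_succ
  have hs : s n ∈ Wlt P (n + 1) := (hsmonic n).mem_Wlt_succ
  have hΔs : ⟪p (n + 1), Δ (s n)⟫ = 0 :=
    hportho _ _ (Wlt_mono P n.le_succ (delta_mem_Wlt hΔ0 hΔsucc hs))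
  rw [innerS, hGinv _ hp, hΔs, hGsym _ hp _ (Wlt_le_Wtot P _ hs),
    inner_eq_norm_sq_of_isMonicOfDeg hpmonic hportho
      ((hsmonic n).green hP hΔ0 hΔsucc hGinv hGmap)]
  ring

lemma norm_succ_le_mul_norm_of_isMonicOfDeg (hP : LinearIndependent ℝ P) (hΔ0 : Δ (P 0) = 0)
    (hΔsucc : ∀ n, Δ (P (n + 1)) = P n) (hGinv : ∀ u ∈ Wtot P, Δ (G u) = u)
    (hGmap : ∀ n, ∀ u ∈ Wlt P (n + 1), G u ∈ Wlt P (n + 2)) {C : ℝ}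
    (hGbound : ∀ u ∈ Wtot P, ‖G u‖ ≤ C * ‖u‖)
    (hpmonic : ∀ n, IsMonicOfDeg P n (p n)) (hportho : ∀ n, ∀ w ∈ Wlt P n, ⟪p n, w⟫ = 0)
    {n : ℕ} {u : H} (hu : IsMonicOfDeg P n u) : ‖p (n + 1)‖ ≤ C * ‖u‖ :=
  (norm_le_norm_of_isMonicOfDeg hpmonic hportho (hu.green hP hΔ0 hΔsucc hGinv hGmap)).trans
    (hGbound u (Wlt_le_Wtot P _ hu.mem_Wlt_succ))

end Recurrence

theorem statement9_general
    (P : ℕ → H) (hP : LinearIndependent ℝ P)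
    (Δ G : H →ₗ[ℝ] H)
    (hΔ0 : Δ (P 0) = 0) (hΔsucc : ∀ n, Δ (P (n + 1)) = P n)
    (hGsym : ∀ u ∈ Wtot P, ∀ v ∈ Wtot P, ⟪ G u, v ⟫ = ⟪ u, G v ⟫)
    (hGinv : ∀ u ∈ Wtot P, Δ (G u) = u)
    (hGmap : ∀ n, ∀ u ∈ Wlt P (n + 1), G u ∈ Wlt P (n + 2))
    (C : ℝ) (hC : 0 < C)
    (hGbound : ∀ u ∈ Wtot P, ‖G u‖ ≤ C * ‖u‖)
    (χ : ℝ) (hχ : 0 < χ)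
    (p : ℕ → H)
    (hpmonic : ∀ n, p n - P n ∈ Wlt P n)
    (hportho : ∀ n, ∀ w ∈ Wlt P n, ⟪ p n, w ⟫ = 0)
    (s : ℕ → H)
    (hsmonic : ∀ n, s n - P n ∈ Wlt P n)
    : ∀ n, 1 ≤ n →
      innerS Δ χ (G (p n)) (s (n - 1)) / (‖s (n - 1)‖ ^ 2 + χ * ‖Δ (s (n - 1))‖ ^ 2)
        = ‖p n‖ ^ 2 / (‖s (n - 1)‖ ^ 2 + χ * ‖Δ (s (n - 1))‖ ^ 2) ∧
      0 < innerS Δ χ (G (p n)) (s (n - 1)) /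
            (‖s (n - 1)‖ ^ 2 + χ * ‖Δ (s (n - 1))‖ ^ 2) ∧
      innerS Δ χ (G (p n)) (s (n - 1)) /
            (‖s (n - 1)‖ ^ 2 + χ * ‖Δ (s (n - 1))‖ ^ 2) ≤ C ^ 2 ∧
      (2 ≤ n →
        innerS Δ χ (G (p n)) (s (n - 1)) /
            (‖s (n - 1)‖ ^ 2 + χ * ‖Δ (s (n - 1))‖ ^ 2) ≤ χ⁻¹ * C ^ 4) := by
  replace hpmonic : ∀ n, IsMonicOfDeg P n (p n) := hpmonic
  replace hsmonic : ∀ n, IsMonicOfDeg P n (s n) := hsmonic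
  intro n hn
  obtain ⟨m, rfl⟩ : ∃ m, n = m + 1 := ⟨n - 1, by omega⟩
  rw [Nat.add_sub_cancel, innerS_green_eq_norm_sq hP hΔ0 hΔsucc hGsym hGinv hGmap χ hpmonic hportho
    hsmonic]
  have hbound {n : ℕ} {u : H} (hu : IsMonicOfDeg P n u) : ‖p (n + 1)‖ ≤ C * ‖u‖ :=
    norm_succ_le_mul_norm_of_isMonicOfDeg hP hΔ0 hΔsucc hGinv hGmap hGbound hpmonic hportho hu
  have hD : 0 < ‖s m‖ ^ 2 + χ * ‖Δ (s m)‖ ^ 2 := by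
    have := norm_pos_iff.mpr ((hsmonic m).ne_zero hP)
    positivity
  have hp : 0 < ‖p (m + 1)‖ := norm_pos_iff.mpr ((hpmonic (m + 1)).ne_zero hP)
  refine ⟨rfl, div_pos (pow_pos hp 2) hD, ?_, fun hm => ?_⟩
  · rw [div_le_iff₀ hD]
    calc ‖p (m + 1)‖ ^ 2 ≤ (C * ‖s m‖) ^ 2 := by gcongr; exact hbound (hsmonic m)
      _ ≤ C ^ 2 * (‖s m‖ ^ 2 + χ * ‖Δ (s m)‖ ^ 2) := by
          rw [mul_pow]
          gcongr
          exact le_add_of_nonneg_right (by positivity)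
  · obtain ⟨k, rfl⟩ : ∃ k, m = k + 1 := ⟨m - 1, by omega⟩
    have hGp := (hpmonic k).green hP hΔ0 hΔsucc hGinv hGmap
    rw [div_le_iff₀ hD]
    calc ‖p (k + 1 + 1)‖ ^ 2 ≤ (C * (C * ‖p k‖)) ^ 2 := by
          gcongr
          refine (hbound hGp).trans ?_
          gcongr
          exact hGbound _ (Wlt_le_Wtot P _ (hpmonic k).mem_Wlt_succ)
      _ ≤ (C ^ 2 * ‖Δ (s (k + 1))‖) ^ 2 := by
          rw [← mul_assoc, ← sq]
          gcongr
          exact norm_le_norm_of_isMonicOfDeg hpmonic hportho ((hsmonic (k + 1)).delta hΔ0 hΔsucc)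
      _ = χ⁻¹ * C ^ 4 * (χ * ‖Δ (s (k + 1))‖ ^ 2) := by field_simp
      _ ≤ χ⁻¹ * C ^ 4 * (‖s (k + 1)‖ ^ 2 + χ * ‖Δ (s (k + 1))‖ ^ 2) := by
          gcongr
          exact le_add_of_nonneg_left (sq_nonneg _)

/-- For `n ≥ 1`, `b̃_n = ‖p_n‖₂²/‖s_{n−1}‖_S²` and `0 < b̃_n ≤ C²`; for `n ≥ 2` also `b̃_n ≤ χ⁻¹C⁴`. -/
theorem statement9
    (P : ℕ → H) (hP : LinearIndependent ℝ P)
    (Δ G : H →ₗ[ℝ] H)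
    (hΔ0 : Δ (P 0) = 0) (hΔsucc : ∀ n, Δ (P (n + 1)) = P n)
    (hGsym : ∀ u ∈ Wtot P, ∀ v ∈ Wtot P, ⟪ G u, v ⟫ = ⟪ u, G v ⟫)
    (hGinv : ∀ u ∈ Wtot P, Δ (G u) = u)
    (hGmap : ∀ n, ∀ u ∈ Wlt P (n + 1), G u ∈ Wlt P (n + 2))
    (C : ℝ) (hC : 0 < C)
    (hGbound : ∀ u ∈ Wtot P, ‖G u‖ ≤ C * ‖u‖)
    (χ : ℝ) (hχ : 0 < χ)
    (p : ℕ → H)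
    (hpmonic : ∀ n, p n - P n ∈ Wlt P n)
    (hportho : ∀ n, ∀ w ∈ Wlt P n, ⟪ p n, w ⟫ = 0)
    (s : ℕ → H)
    (hsmonic : ∀ n, s n - P n ∈ Wlt P n)
    (hsortho : ∀ n, ∀ w ∈ Wlt P n, innerS Δ χ (s n) w = 0)
    : ∀ n, 1 ≤ n →
      innerS Δ χ (G (p n)) (s (n - 1)) / (‖s (n - 1)‖ ^ 2 + χ * ‖Δ (s (n - 1))‖ ^ 2)
        = ‖p n‖ ^ 2 / (‖s (n - 1)‖ ^ 2 + χ * ‖Δ (s (n - 1))‖ ^ 2) ∧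
      0 < innerS Δ χ (G (p n)) (s (n - 1)) /
            (‖s (n - 1)‖ ^ 2 + χ * ‖Δ (s (n - 1))‖ ^ 2) ∧
      innerS Δ χ (G (p n)) (s (n - 1)) /
            (‖s (n - 1)‖ ^ 2 + χ * ‖Δ (s (n - 1))‖ ^ 2) ≤ C ^ 2 ∧
      (2 ≤ n →
        innerS Δ χ (G (p n)) (s (n - 1)) /
            (‖s (n - 1)‖ ^ 2 + χ * ‖Δ (s (n - 1))‖ ^ 2) ≤ χ⁻¹ * C ^ 4) :=
  statement9_general P hP Δ G hΔ0 hΔsucc hGsym hGinv hGmap C hC hGbound χ hχ p hpmonic hportho s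
    hsmonic
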